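/- If G is a simple graph of order n ≥ 2 with q₂(G) = n − 2, then the smallest signless Laplacian eigenvalue of the complement of G is zero, i.e., qₙ(Ḡ) = 0, and consequently the complement of G has at least one bipartite component. -/

import Mathlib

/-!
The signless Laplacians of `G` and `Ḡ` add up to `(n - 2) I + J`. Since `q₂(G) = n - 2`, the
plane spanned by eigenvectors for `q₁(G)` and `q₂(G)` contains a nonzero `x` orthogonal to the
all-ones vector, with `xᵀ Q(G) x ≥ (n - 2) ‖x‖²`; hence `xᵀ Q(Ḡ) x = ∑_{uv ∈ E(Ḡ)} (x_u + x_v)²`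
is `≤ 0`. So `x_u = -x_v` along every edge of `Ḡ`: `x` is a null vector of the positive
semidefinite `Q(Ḡ)`, which gives `qₙ(Ḡ) = 0`, and the sign of `x` two-colours the component of
`Ḡ` at any vertex where `x` does not vanish.
-/

open Matrix SimpleGraph
open scoped Classical

/-- The `k`-th largest eigenvalue (1-indexed, counted with multiplicity) of a real
symmetric (Hermitian) matrix; junk value `0` if `M` is not Hermitian or `k` is out of range. -/
noncomputable def kthEig {V : Type*} [Fintype V] [DecidableEq V]
    (M : Matrix V V ℝ) (k : ℕ) : ℝ :=
  if hM : M.IsHermitian then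
    if h : k - 1 < Fintype.card V then
      letI f : Fin (Fintype.card V) → ℝ := hM.eigenvalues ∘ (Fintype.equivFin V).symm
      (f ∘ Tuple.sort f) (Fin.rev ⟨k - 1, h⟩)
    else 0
  else 0

/-- The signless Laplacian `Q(G) = D(G) + A(G)` of a simple graph `G`. -/
noncomputable def signlessLap {V : Type*} [Fintype V] [DecidableEq V]
    (G : SimpleGraph V) [DecidableRel G.Adj] : Matrix V V ℝ :=
  G.degMatrix ℝ + G.adjMatrix ℝ

/-- `qEig G k` is the `k`-th largest signless Laplacian eigenvalue `q_k(G)`. -/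
noncomputable def qEig {V : Type*} [Fintype V] [DecidableEq V]
    (G : SimpleGraph V) [DecidableRel G.Adj] (k : ℕ) : ℝ :=
  kthEig (signlessLap G) k

/-- `c` is a bipartite connected component of `H`: the vertex set of the component splits
into two disjoint classes `U`, `W` such that every edge of the component joins `U` and `W`. -/
def IsBipartiteComponent {V : Type*} (H : SimpleGraph V) (c : H.ConnectedComponent) : Prop :=
  ∃ U W : Set V, U ∪ W = c.supp ∧ Disjoint U W ∧
    ∀ ⦃u v : V⦄, u ∈ c.supp → H.Adj u v → (u ∈ U ∧ v ∈ W) ∨ (u ∈ W ∧ v ∈ U)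

/-- `c` is a balanced bipartite connected component of `H`: bipartite with vertex classes
of equal size. -/
def IsBalancedBipartiteComponent {V : Type*} (H : SimpleGraph V)
    (c : H.ConnectedComponent) : Prop :=
  ∃ U W : Set V, U ∪ W = c.supp ∧ Disjoint U W ∧ U.ncard = W.ncard ∧
    ∀ ⦃u v : V⦄, u ∈ c.supp → H.Adj u v → (u ∈ U ∧ v ∈ W) ∨ (u ∈ W ∧ v ∈ U)

/-- `G` is the complete multipartite graph whose parts are the fibers of `p`:
two vertices are adjacent iff they lie in different parts. -/
def IsCompleteMultipartiteWith {V ι : Type*} (G : SimpleGraph V) (p : V → ι) : Prop :=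
  ∀ u v : V, G.Adj u v ↔ p u ≠ p v


section SignlessLaplacian

variable {V : Type*} [Fintype V] [DecidableEq V] (H : SimpleGraph V) [DecidableRel H.Adj]

theorem isHermitian_signlessLap : (signlessLap H).IsHermitian := by
  rw [IsHermitian, conjTranspose_eq_transpose_of_trivial]
  exact (H.isSymm_degMatrix ℝ).add H.isSymm_adjMatrix

theorem dotProduct_signlessLap_mulVec (x : V → ℝ) :
    x ⬝ᵥ (signlessLap H *ᵥ x) =
      (∑ i : V, ∑ j : V, if H.Adj i j then (x i + x j) ^ 2 else 0) / 2 := by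
  simp_rw [signlessLap, add_mulVec, dotProduct_add, dotProduct_mulVec_degMatrix,
    dotProduct_mulVec_adjMatrix, ← Finset.sum_add_distrib, degree_eq_sum_if_adj, Finset.sum_mul,
    ite_mul, one_mul, zero_mul, ← Finset.sum_add_distrib, ite_add_ite, add_zero]
  rw [← add_self_div_two (∑ i : V, ∑ j : V, _)]
  conv_lhs => enter [1, 2, 2, i, 2, j]; rw [if_congr (H.adj_comm i j) rfl rfl]
  conv_lhs => enter [1, 2]; rw [Finset.sum_comm]
  simp_rw [← Finset.sum_add_distrib, ite_add_ite]
  congr 2 with i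
  congr 2 with j
  ring_nf

theorem posSemidef_signlessLap : (signlessLap H).PosSemidef := by
  refine .of_dotProduct_mulVec_nonneg (isHermitian_signlessLap H) fun x ↦ ?_
  rw [star_trivial, dotProduct_signlessLap_mulVec]
  positivity

theorem dotProduct_signlessLap_mulVec_eq_zero_iff_forall_adj (x : V → ℝ) :
    x ⬝ᵥ (signlessLap H *ᵥ x) = 0 ↔ ∀ i j : V, H.Adj i j → x i + x j = 0 := by
  simp (disch := intros; positivity)
    [dotProduct_signlessLap_mulVec, Finset.sum_eq_zero_iff_of_nonneg]

theorem signlessLap_mulVec_eq_zero_iff_forall_adj {x : V → ℝ} :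
    signlessLap H *ᵥ x = 0 ↔ ∀ i j : V, H.Adj i j → x i + x j = 0 := by
  rw [← (posSemidef_signlessLap H).dotProduct_mulVec_zero_iff, star_trivial,
    dotProduct_signlessLap_mulVec_eq_zero_iff_forall_adj]

end SignlessLaplacian

section Complement

variable {V : Type*} [Fintype V] [DecidableEq V] (G : SimpleGraph V) [DecidableRel G.Adj]
  [DecidableRel Gᶜ.Adj]

theorem signlessLap_add_signlessLap_compl :
    signlessLap G + signlessLap Gᶜ =
      ((Fintype.card V : ℝ) - 2) • (1 : Matrix V V ℝ) + Matrix.of fun _ _ ↦ 1 := by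
  ext u v
  rcases eq_or_ne u v with rfl | huv
  · have hdeg : G.degree u + Gᶜ.degree u + 1 = Fintype.card V := by
      have := G.degree_lt_card_verts u
      rw [degree_compl]
      omega
    have hdeg' : (G.degree u : ℝ) + Gᶜ.degree u + 1 = Fintype.card V := mod_cast hdeg
    simp only [signlessLap, degMatrix, Matrix.add_apply, diagonal_apply_eq, adjMatrix_apply,
      Matrix.smul_apply, one_apply_eq, of_apply, G.irrefl, Gᶜ.irrefl, if_false, smul_eq_mul]
    linarith
  · by_cases hadj : G.Adj u v <;>
      simp [signlessLap, degMatrix, Matrix.add_apply, one_apply_ne huv, huv, hadj]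

theorem dotProduct_signlessLap_mulVec_add_compl {x : V → ℝ} (hx : ∑ v, x v = 0) :
    x ⬝ᵥ (signlessLap G *ᵥ x) + x ⬝ᵥ (signlessLap Gᶜ *ᵥ x) =
      (Fintype.card V - 2) * (x ⬝ᵥ x) := by
  rw [← dotProduct_add, ← add_mulVec, signlessLap_add_signlessLap_compl, add_mulVec,
    smul_mulVec, one_mulVec, dotProduct_add, dotProduct_smul]
  simp [mulVec, dotProduct, hx]

end Complement

section Eigenvalues

variable {V : Type*} [Fintype V] [DecidableEq V] {M : Matrix V V ℝ}

theorem exists_card_eq_forall_kthEig_le_eigenvalues (hM : M.IsHermitian) {k : ℕ} (hk0 : 0 < k)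
    (hk : k ≤ Fintype.card V) :
    ∃ s : Finset V, s.card = k ∧ ∀ i ∈ s, kthEig M k ≤ hM.eigenvalues i := by
  have h : k - 1 < Fintype.card V := by omega
  -- `Tuple.sort f` sorts increasingly: the positions from `rev (k - 1)` on carry the `k` largest.
  set f := hM.eigenvalues ∘ (Fintype.equivFin V).symm
  refine ⟨(Finset.Ici (Fin.rev ⟨k - 1, h⟩)).map
    ((Tuple.sort f).toEmbedding.trans (Fintype.equivFin V).symm.toEmbedding), ?_, ?_⟩
  · simp only [Finset.card_map, Fin.card_Ici, Fin.val_rev]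
    omega
  · simp only [Finset.mem_map, Finset.mem_Ici]
    rintro _ ⟨j, hj, rfl⟩
    rw [kthEig, dif_pos hM, dif_pos h]
    exact Tuple.monotone_sort f hj

theorem exists_eigenvalues_eq_kthEig (hM : M.IsHermitian) {k : ℕ} (hk : k - 1 < Fintype.card V) :
    ∃ i, hM.eigenvalues i = kthEig M k :=
  ⟨_, by rw [kthEig, dif_pos hM, dif_pos hk]; rfl⟩

theorem kthEig_card_le_eigenvalues (hM : M.IsHermitian) (i : V) :
    kthEig M (Fintype.card V) ≤ hM.eigenvalues i := by
  obtain ⟨s, hs, hle⟩ :=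
    exists_card_eq_forall_kthEig_le_eigenvalues hM (Fintype.card_pos_iff.mpr ⟨i⟩) le_rfl
  exact hle i (Finset.eq_univ_of_card s hs ▸ Finset.mem_univ i)

theorem dotProduct_eigenvectorBasis (hM : M.IsHermitian) (i j : V) :
    ⇑(hM.eigenvectorBasis i) ⬝ᵥ ⇑(hM.eigenvectorBasis j) = if i = j then 1 else 0 := by
  rw [← orthonormal_iff_ite.mp hM.eigenvectorBasis.orthonormal i j,
    EuclideanSpace.inner_eq_star_dotProduct, star_trivial, dotProduct_comm]

theorem kthEig_card_eq_zero_of_posSemidef (hM : M.PosSemidef) {x : V → ℝ} (hx : x ≠ 0)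
    (hMx : M *ᵥ x = 0) :
    kthEig M (Fintype.card V) = 0 := by
  obtain ⟨i, hi⟩ : ∃ i, hM.1.eigenvalues i = 0 := by
    have hdet : M.det = 0 := exists_mulVec_eq_zero_iff.mp ⟨x, hx, hMx⟩
    rw [hM.1.det_eq_prod_eigenvalues] at hdet
    simpa [Finset.prod_eq_zero_iff] using hdet
  obtain ⟨j, hj⟩ := exists_eigenvalues_eq_kthEig hM.1 (k := Fintype.card V)
    (Nat.sub_lt (Fintype.card_pos_iff.mpr ⟨i⟩) one_pos)
  exact le_antisymm (hi ▸ kthEig_card_le_eigenvalues hM.1 i) (hj ▸ hM.eigenvalues_nonneg j)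

theorem exists_dotProduct_eq_zero_and_kthEig_two_mul_le (hM : M.IsHermitian)
    (h2 : 2 ≤ Fintype.card V) (w : V → ℝ) :
    ∃ x ≠ 0, x ⬝ᵥ w = 0 ∧ kthEig M 2 * (x ⬝ᵥ x) ≤ x ⬝ᵥ (M *ᵥ x) := by
  obtain ⟨s, hs, hle⟩ := exists_card_eq_forall_kthEig_le_eigenvalues hM two_pos h2
  obtain ⟨i, j, hij, rfl⟩ := Finset.card_eq_two.mp hs
  set u : V → V → ℝ := fun k ↦ ⇑(hM.eigenvectorBasis k)
  have hu := dotProduct_eigenvectorBasis hM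
  obtain ⟨a, b, hab, habw⟩ :
      ∃ a b : ℝ, (a ≠ 0 ∨ b ≠ 0) ∧ a * (u i ⬝ᵥ w) + b * (u j ⬝ᵥ w) = 0 := by
    by_cases hi : u i ⬝ᵥ w = 0
    · exact ⟨1, 0, by simp, by simp [hi]⟩
    · exact ⟨u j ⬝ᵥ w, -(u i ⬝ᵥ w), Or.inr (neg_ne_zero.mpr hi), by ring⟩
  set x := a • u i + b • u j
  have hxx : x ⬝ᵥ x = a ^ 2 + b ^ 2 := by
    simp [x, u, add_dotProduct, dotProduct_add, hu, hij, hij.symm]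
    ring
  have hxMx : x ⬝ᵥ (M *ᵥ x) = a ^ 2 * hM.eigenvalues i + b ^ 2 * hM.eigenvalues j := by
    simp [x, u, mulVec_add, mulVec_smul, hM.mulVec_eigenvectorBasis, add_dotProduct,
      dotProduct_add, hu, hij, hij.symm]
    ring
  refine ⟨x, fun hx ↦ ?_, by simpa [x, add_dotProduct] using habw, ?_⟩
  · rw [hx, zero_dotProduct] at hxx
    rcases hab with ha | hb
    · nlinarith [sq_pos_of_ne_zero ha, sq_nonneg b]
    · nlinarith [sq_pos_of_ne_zero hb, sq_nonneg a]
  · rw [hxx, hxMx]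
    nlinarith [hle i (by simp), hle j (by simp), sq_nonneg a, sq_nonneg b]

end Eigenvalues

section Bipartite

variable {V : Type*} {H : SimpleGraph V} {x : V → ℝ}

theorem SimpleGraph.Reachable.eq_or_eq_neg_of_forall_adj_add_eq_zero
    (hx : ∀ i j, H.Adj i j → x i + x j = 0) {u v : V} (huv : H.Reachable u v) :
    x u = x v ∨ x u = -x v := by
  obtain ⟨p⟩ := huv
  induction p with
  | nil => exact Or.inl rfl
  | cons hadj _ ih =>
    have := hx _ _ hadj
    rcases ih with h | h
    · exact Or.inr (by linarith)
    · exact Or.inl (by linarith)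

theorem isBipartiteComponent_of_forall_adj_add_eq_zero
    (hx : ∀ i j, H.Adj i j → x i + x j = 0) {v : V} (hv : x v ≠ 0) :
    IsBipartiteComponent H (H.connectedComponentMk v) := by
  set c := H.connectedComponentMk v
  have hsign : ∀ u ∈ c.supp, x u = x v ∨ x u = -x v := fun u hu ↦
    (ConnectedComponent.mem_supp_iff _ _ |>.mp hu |> ConnectedComponent.exact)
      |>.eq_or_eq_neg_of_forall_adj_add_eq_zero hx
  refine ⟨{u | u ∈ c.supp ∧ x u = x v}, {u | u ∈ c.supp ∧ x u = -x v}, ?_, ?_, ?_⟩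
  · ext u
    constructor
    · rintro (⟨hu, _⟩ | ⟨hu, _⟩) <;> exact hu
    · intro hu
      exact (hsign u hu).imp (⟨hu, ·⟩) (⟨hu, ·⟩)
  · refine Set.disjoint_left.mpr fun u ⟨_, h₁⟩ ⟨_, h₂⟩ ↦ hv ?_
    linarith
  · intro u w hu hadj
    have hw : w ∈ c.supp := by
      rwa [ConnectedComponent.mem_supp_iff,
        ← ConnectedComponent.connectedComponentMk_eq_of_adj hadj]
    have := hx u w hadj
    rcases hsign u hu with h | h
    · exact Or.inl ⟨⟨hu, h⟩, hw, by linarith⟩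
    · exact Or.inr ⟨⟨hu, h⟩, hw, by linarith⟩

end Bipartite

/-- If `G` is a graph of order `n ≥ 2` with `q₂(G) = n - 2`, then `q_n(Ḡ) = 0` and the
complement of `G` has a bipartite component. -/
theorem qn_compl_eq_zero_of_q2 (n : ℕ) (hn : 2 ≤ n)
    (G : SimpleGraph (Fin n)) [DecidableRel G.Adj]
    (h : qEig G 2 = (n : ℝ) - 2) :
    qEig Gᶜ n = 0 ∧ ∃ c : Gᶜ.ConnectedComponent, IsBipartiteComponent Gᶜ c := by
  obtain ⟨x, hx0, hx1, hxG⟩ := exists_dotProduct_eq_zero_and_kthEig_two_mul_le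
    (isHermitian_signlessLap G) (by simpa using hn) 1
  have hq2 : kthEig (signlessLap G) 2 = n - 2 := h
  have hxGc : x ⬝ᵥ (signlessLap Gᶜ *ᵥ x) = 0 := by
    have hsum := dotProduct_signlessLap_mulVec_add_compl G (dotProduct_one x ▸ hx1)
    have hnonneg := (posSemidef_signlessLap Gᶜ).dotProduct_mulVec_nonneg x
    rw [Fintype.card_fin] at hsum
    rw [star_trivial] at hnonneg
    rw [hq2] at hxG
    linarith
  have hadj := (dotProduct_signlessLap_mulVec_eq_zero_iff_forall_adj Gᶜ x).mp hxGc
  obtain ⟨v, hv⟩ := Function.ne_iff.mp hx0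
  refine ⟨?_, _, isBipartiteComponent_of_forall_adj_add_eq_zero hadj hv⟩
  simpa [qEig] using kthEig_card_eq_zero_of_posSemidef (posSemidef_signlessLap Gᶜ) hx0
    ((signlessLap_mulVec_eq_zero_iff_forall_adj Gᶜ).mpr hadj)
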